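/- Let U ⊆ ℝ⁴ \ {0} be an open conic set and L : U → ℝ a smooth, nowhere-zero function, positively homogeneous of degree 2, whose L-metric g(y) (entries g_{ij}(y) = (1/2)∂²L/∂yⁱ∂yʲ(y)) is invertible on U with inverse entries g^{ij}(y). Let f : U → ℝ be smooth and positively homogeneous of degree 0. Then for every y ∈ U: ( Σ_{i,j} ( g^{ij}(y) − 4 yⁱ yʲ / L(y) ) · ∂²(L·f)/∂yⁱ∂yʲ(y) ) · det g(y)/L(y)² = Σ_j ∂/∂yʲ [ (Σ_i g^{ji} ∂f/∂yⁱ)·det g/L ](y). -/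

import Mathlib

noncomputable section

/-- Partial derivative `∂f/∂yⁱ(y)`. -/
def pd (f : (Fin 4 → ℝ) → ℝ) (i : Fin 4) (y : Fin 4 → ℝ) : ℝ :=
  fderiv ℝ f y (Pi.single i 1)

/-- The L-metric: the matrix `g_{ij}(y) = (1/2) ∂²L/∂yⁱ∂yʲ (y)`. -/
def Lmetric (L : (Fin 4 → ℝ) → ℝ) (y : Fin 4 → ℝ) : Matrix (Fin 4) (Fin 4) ℝ :=
  Matrix.of fun i j => (1 / 2) * pd (pd L j) i y

abbrev E4 := Fin 4 → ℝ

lemma pd_contDiffOn {U : Set E4} (hU : IsOpen U) {F : E4 → ℝ}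
    (hF : ContDiffOn ℝ (⊤ : ℕ∞) F U) (i : Fin 4) : ContDiffOn ℝ (⊤ : ℕ∞) (pd F i) U := by
  have h1 : ContDiffOn ℝ (⊤ : ℕ∞) (fderiv ℝ F) U := hF.fderiv_of_isOpen hU (by simp)
  exact h1.clm_apply contDiffOn_const

lemma pd_diffAt {U : Set E4} (hU : IsOpen U) {F : E4 → ℝ}
    (hF : ContDiffOn ℝ (⊤ : ℕ∞) F U) {y : E4} (hy : y ∈ U) : DifferentiableAt ℝ F y :=
  ((hF.contDiffAt (hU.mem_nhds hy)).differentiableAt (by simp))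

lemma pd_congr_on {U : Set E4} (hU : IsOpen U) {F G : E4 → ℝ}
    (h : ∀ z ∈ U, F z = G z) {y : E4} (hy : y ∈ U) (i : Fin 4) : pd F i y = pd G i y := by
  have : F =ᶠ[nhds y] G := Filter.eventuallyEq_of_mem (hU.mem_nhds hy) h
  unfold pd; rw [this.fderiv_eq]

lemma pd_mul {F G : E4 → ℝ} {y : E4} (hF : DifferentiableAt ℝ F y)
    (hG : DifferentiableAt ℝ G y) (i : Fin 4) :
    pd (fun z => F z * G z) i y = pd F i y * G y + F y * pd G i y := by
  unfold pd; rw [fderiv_fun_mul hF hG]; simp; ring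

lemma pd_add {F G : E4 → ℝ} {y : E4} (hF : DifferentiableAt ℝ F y)
    (hG : DifferentiableAt ℝ G y) (i : Fin 4) :
    pd (fun z => F z + G z) i y = pd F i y + pd G i y := by
  unfold pd; rw [fderiv_fun_add hF hG]; simp

lemma pd_const (c : ℝ) (i : Fin 4) (y : E4) : pd (fun _ => c) i y = 0 := by
  unfold pd; simp

lemma pd_const_mul {F : E4 → ℝ} {y : E4} (hF : DifferentiableAt ℝ F y) (c : ℝ) (i : Fin 4) :
    pd (fun z => c * F z) i y = c * pd F i y := by
  unfold pd; rw [fderiv_const_mul hF]; simp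

lemma pd_sum {ι : Type*} (u : Finset ι) {F : ι → E4 → ℝ} {y : E4}
    (hF : ∀ k ∈ u, DifferentiableAt ℝ (F k) y) (i : Fin 4) :
    pd (fun z => ∑ k ∈ u, F k z) i y = ∑ k ∈ u, pd (F k) i y := by
  unfold pd; rw [fderiv_fun_sum hF]; simp

lemma pd_inv {F : E4 → ℝ} {y : E4} (hF : DifferentiableAt ℝ F y) (hne : F y ≠ 0) (i : Fin 4) :
    pd (fun z => (F z)⁻¹) i y = -(pd F i y) / (F y) ^ 2 := by
  have hinv : DifferentiableAt ℝ (fun z => (F z)⁻¹) y := hF.inv hne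
  have hev : (fun z => F z * (F z)⁻¹) =ᶠ[nhds y] (fun _ => (1:ℝ)) := by
    filter_upwards [hF.continuousAt.eventually_ne hne] with z hz
    exact mul_inv_cancel₀ hz
  have h0 : pd (fun z => F z * (F z)⁻¹) i y = 0 := by
    unfold pd; rw [hev.fderiv_eq]; simp
  rw [pd_mul hF hinv] at h0
  have h2 : F y * pd (fun z => (F z)⁻¹) i y = -(pd F i y * (F y)⁻¹) := by linarith
  field_simp at h2 ⊢
  rw [pow_two]; linarith [h2]
-- Schwarz
lemma pd_comm {U : Set E4} (hU : IsOpen U) {F : E4 → ℝ}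
    (hF : ContDiffOn ℝ (⊤ : ℕ∞) F U) {y : E4} (hy : y ∈ U) (i j : Fin 4) :
    pd (pd F i) j y = pd (pd F j) i y := by
  have hat : ContDiffAt ℝ (⊤ : ℕ∞) F y := hF.contDiffAt (hU.mem_nhds hy)
  have hd : DifferentiableAt ℝ (fderiv ℝ F) y :=
    (hat.fderiv_right (m := 1) (by exact WithTop.coe_le_coe.mpr (le_top : ((1 + 1 : ℕ) : ℕ∞) ≤ ⊤))).differentiableAt one_ne_zero
  have key : ∀ a b : Fin 4, pd (pd F a) b y
      = fderiv ℝ (fderiv ℝ F) y (Pi.single b 1) (Pi.single a 1) := by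
    intro a b
    have h2 := fderiv_clm_apply (c := fderiv ℝ F) (u := fun _ => (Pi.single a 1 : E4))
      hd (differentiableAt_const _) (x := y)
    unfold pd
    rw [h2]
    simp
  rw [key i j, key j i]
  exact (hat.isSymmSndFDerivAt (by rw [minSmoothness_of_isRCLikeNormedField]; exact WithTop.coe_le_coe.mpr (le_top : (2 : ℕ∞) ≤ ⊤))) _ _

-- Euler-type lemma
lemma euler {U : Set E4} (hU : IsOpen U) {F : E4 → ℝ}
    (hF : ContDiffOn ℝ (⊤ : ℕ∞) F U) {y : E4} (hy : y ∈ U) {r : ℝ} {c : ℝ → ℝ}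
    (hc : HasDerivAt c r 1)
    (hhom : ∀ l : ℝ, 0 < l → F (l • y) = c l * F y) :
    ∑ i, y i * pd F i y = r * F y := by
  have hdF : DifferentiableAt ℝ F y := (hF.contDiffAt (hU.mem_nhds hy)).differentiableAt (by simp)
  have hsm : HasDerivAt (fun l : ℝ => l • y) ((1:ℝ) • y) 1 := (hasDerivAt_id 1).smul_const y
  have h1y : HasFDerivAt F (fderiv ℝ F y) ((1:ℝ) • y) := by
    rw [one_smul]; exact hdF.hasFDerivAt
  have hφ : HasDerivAt (fun l : ℝ => F (l • y)) (fderiv ℝ F y ((1:ℝ) • y)) 1 :=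
    h1y.comp_hasDerivAt 1 hsm
  have hψ : HasDerivAt (fun l : ℝ => F (l • y)) (r * F y) 1 := by
    have h2 : HasDerivAt (fun l : ℝ => c l * F y) (r * F y) 1 := hc.mul_const (F y)
    apply h2.congr_of_eventuallyEq
    filter_upwards [eventually_gt_nhds (zero_lt_one)] with l hl
    exact hhom l hl
  have huniq := hφ.unique hψ
  have hrepr : y = ∑ i, y i • (Pi.single i 1 : E4) := by
    funext j
    simp [Finset.sum_apply, Pi.single_apply]
  have hyy : fderiv ℝ F y y = ∑ i, y i * pd F i y := by
    rw [show (fderiv ℝ F y) y = fderiv ℝ F y (∑ i, y i • (Pi.single i 1 : E4)) from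
      congrArg _ hrepr, map_sum]
    simp [pd]
  rw [← hyy]
  rw [one_smul] at huniq
  exact huniq

-- homogeneity of derivative
lemma pd_homog {U : Set E4} (hU : IsOpen U)
    (hUconic : ∀ y ∈ U, ∀ l : ℝ, 0 < l → l • y ∈ U) {F : E4 → ℝ}
    (hF : ContDiffOn ℝ (⊤ : ℕ∞) F U) {c : ℝ → ℝ}
    (hhom : ∀ z ∈ U, ∀ l : ℝ, 0 < l → F (l • z) = c l * F z) (i : Fin 4) :
    ∀ y ∈ U, ∀ l : ℝ, 0 < l → pd F i (l • y) = (c l / l) * pd F i y := by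
  intro y hy l hl
  have hly : l • y ∈ U := hUconic y hy l hl
  have hdF : DifferentiableAt ℝ F (l • y) :=
    (hF.contDiffAt (hU.mem_nhds hly)).differentiableAt (by simp)
  have hdFy : DifferentiableAt ℝ F y :=
    (hF.contDiffAt (hU.mem_nhds hy)).differentiableAt (by simp)
  have hlin : HasFDerivAt (fun z : E4 => l • z) (l • ContinuousLinearMap.id ℝ E4) y := by
    have h0 := (ContinuousLinearMap.id ℝ E4).hasFDerivAt (x := y)
    exact h0.const_smul l
  have hcomp : HasFDerivAt (fun z => F (l • z))
      ((fderiv ℝ F (l • y)).comp (l • ContinuousLinearMap.id ℝ E4)) y :=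
    hdF.hasFDerivAt.comp y hlin
  have hev : (fun z => F (l • z)) =ᶠ[nhds y] (fun z => c l * F z) := by
    filter_upwards [hU.mem_nhds hy] with z hz
    exact hhom z hz l hl
  have hcomp2 : HasFDerivAt (fun z => F (l • z)) (c l • fderiv ℝ F y) y := by
    have h3 : HasFDerivAt (fun z => c l * F z) (c l • fderiv ℝ F y) y :=
      (hdFy.hasFDerivAt.const_smul (c l)).congr_fderiv (by ext v; simp)
    exact h3.congr_of_eventuallyEq hev
  have huniq := hcomp.unique hcomp2
  have happ := congrArg (fun (T : E4 →L[ℝ] ℝ) => T (Pi.single i 1)) huniq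
  simp [pd] at happ ⊢
  have hl0 : l ≠ 0 := ne_of_gt hl
  field_simp
  rw [mul_comm] at happ
  linarith [happ]
open Finset Matrix Equiv

lemma diffAt_prod {M : E4 → Matrix (Fin 4) (Fin 4) ℝ} {y : E4}
    (h : ∀ a b, DifferentiableAt ℝ (fun z => M z a b) y) (σ : Equiv.Perm (Fin 4)) :
    DifferentiableAt ℝ (fun z => ∏ i, M z (σ i) i) y :=
  (HasFDerivAt.finset_prod (u := univ) (g := fun i z => M z (σ i) i)
    (g' := fun i => fderiv ℝ (fun z => M z (σ i) i) y)
    (fun i _ => (h (σ i) i).hasFDerivAt)).differentiableAt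

lemma diffAt_det {M : E4 → Matrix (Fin 4) (Fin 4) ℝ} {y : E4}
    (h : ∀ a b, DifferentiableAt ℝ (fun z => M z a b) y) :
    DifferentiableAt ℝ (fun z => (M z).det) y := by
  have hfun : (fun z => (M z).det)
      = fun z => ∑ σ : Perm (Fin 4), ((Perm.sign σ : ℤ) : ℝ) * ∏ i, M z (σ i) i := by
    funext z; rw [Matrix.det_apply']
  rw [hfun]
  exact DifferentiableAt.fun_sum fun σ _ => ((diffAt_prod h σ).const_mul _)

lemma pd_det {M : E4 → Matrix (Fin 4) (Fin 4) ℝ} {y : E4}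
    (h : ∀ a b, DifferentiableAt ℝ (fun z => M z a b) y) (m : Fin 4) :
    pd (fun z => (M z).det) m y
      = ∑ k, ∑ a, (M y).adjugate k a * pd (fun z => M z a k) m y := by
  have hfun : (fun z => (M z).det)
      = fun z => ∑ σ : Perm (Fin 4), ((Perm.sign σ : ℤ) : ℝ) * ∏ i, M z (σ i) i := by
    funext z; rw [Matrix.det_apply']
  rw [hfun]
  rw [pd_sum _ (fun σ _ => ((diffAt_prod h σ).const_mul _)) m]
  have hprod : ∀ σ : Perm (Fin 4),
      pd (fun z => ∏ i, M z (σ i) i) m y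
        = ∑ k, (∏ i ∈ univ.erase k, M y (σ i) i) * pd (fun z => M z (σ k) k) m y := by
    intro σ
    have hf := fderiv_finset_prod (u := univ) (g := fun i z => M z (σ i) i) (x := y)
      (fun i _ => h (σ i) i)
    unfold pd
    rw [show fderiv ℝ (fun z => ∏ i, M z (σ i) i) y
        = ∑ k, (∏ j ∈ univ.erase k, M y (σ j) j) • fderiv ℝ (fun z => M z (σ k) k) y from hf]
    simp [ContinuousLinearMap.sum_apply, ContinuousLinearMap.smul_apply, smul_eq_mul]
  have hstep1 : (∑ σ : Perm (Fin 4),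
        pd (fun z => (((Perm.sign σ : ℤ) : ℝ)) * ∏ i, M z (σ i) i) m y)
      = ∑ σ : Perm (Fin 4), ((Perm.sign σ : ℤ) : ℝ) *
          ∑ k, (∏ i ∈ univ.erase k, M y (σ i) i) * pd (fun z => M z (σ k) k) m y := by
    refine Finset.sum_congr rfl fun σ _ => ?_
    rw [pd_const_mul (diffAt_prod h σ) _ m, hprod σ]
  rw [hstep1]
  set B : Fin 4 → Fin 4 → ℝ := fun a k => pd (fun z => M z a k) m y with hB
  have hswap : ∑ σ : Perm (Fin 4), ((Perm.sign σ : ℤ) : ℝ) *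
        ∑ k, (∏ i ∈ univ.erase k, M y (σ i) i) * B (σ k) k
      = ∑ k, ∑ σ : Perm (Fin 4), ((Perm.sign σ : ℤ) : ℝ) *
          ((∏ i ∈ univ.erase k, M y (σ i) i) * B (σ k) k) := by
    rw [← Finset.sum_comm]
    exact Finset.sum_congr rfl fun σ _ => by rw [Finset.mul_sum]
  rw [hswap]
  refine Finset.sum_congr rfl fun k _ => ?_
  have hdet : ∑ σ : Perm (Fin 4), ((Perm.sign σ : ℤ) : ℝ) *
        ((∏ i ∈ univ.erase k, M y (σ i) i) * B (σ k) k)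
      = ((M y).updateCol k (fun a => B a k)).det := by
    rw [Matrix.det_apply']
    refine Finset.sum_congr rfl fun σ _ => ?_
    congr 1
    rw [← Finset.mul_prod_erase univ
      (fun i => ((M y).updateCol k fun a => B a k) (σ i) i) (mem_univ k)]
    rw [show ((M y).updateCol k fun a => B a k) (σ k) k = B (σ k) k by
      simp [Matrix.updateCol_apply]]
    rw [mul_comm (B (σ k) k)]
    congr 1
    refine Finset.prod_congr rfl fun i hi => ?_
    rw [Matrix.updateCol_apply, if_neg (Finset.ne_of_mem_erase hi)]
  rw [hdet, ← Matrix.cramer_apply, Matrix.cramer_eq_adjugate_mulVec]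
  simp [Matrix.mulVec, dotProduct, hB]

lemma dsum_mul_left (c : ℝ) (F : Fin 4 → Fin 4 → ℝ) :
    c * ∑ i, ∑ j, F i j = ∑ i, ∑ j, c * F i j := by
  simp [Finset.mul_sum]

/-- Third identity of the paper's Lemma 3, in fiber coordinates:
`(g^{ij} − 4yⁱyʲ/L)(Lf)_{·i·j}·det g/L²` is the divergence of
`X^j = (g^{ji} f_{·i})·det g/L`. -/
theorem lemma3_third_identity (U : Set (Fin 4 → ℝ)) (hUopen : IsOpen U)
    (hU0 : ∀ y ∈ U, y ≠ (0 : Fin 4 → ℝ))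
    (hUconic : ∀ y ∈ U, ∀ l : ℝ, 0 < l → l • y ∈ U)
    (L : (Fin 4 → ℝ) → ℝ) (hLs : ContDiffOn ℝ (⊤ : ℕ∞) L U) (hL0 : ∀ y ∈ U, L y ≠ 0)
    (hhom : ∀ y ∈ U, ∀ l : ℝ, 0 < l → L (l • y) = l ^ 2 * L y)
    (hinv : ∀ y ∈ U, IsUnit (Lmetric L y).det)
    (f : (Fin 4 → ℝ) → ℝ) (hfs : ContDiffOn ℝ (⊤ : ℕ∞) f U)
    (hfhom : ∀ y ∈ U, ∀ l : ℝ, 0 < l → f (l • y) = f y) :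
    ∀ y ∈ U,
      (∑ i : Fin 4, ∑ j : Fin 4,
          ((Lmetric L y)⁻¹ i j - 4 * y i * y j / L y) *
            pd (pd (fun z => L z * f z) j) i y) *
          (Lmetric L y).det / (L y) ^ 2 =
      ∑ j : Fin 4,
        fderiv ℝ
          (fun z => (∑ i : Fin 4, (Lmetric L z)⁻¹ j i * pd f i z) *
            (Lmetric L z).det / L z) y (Pi.single j 1) := by
  intro y hy
  have hLy : L y ≠ 0 := hL0 y hy
  have hDne : (Lmetric L y).det ≠ 0 := (hinv y hy).ne_zero
  -- smoothness of metric entries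
  have hgeq : ∀ a b : Fin 4, (fun z => Lmetric L z a b)
      = fun z => (1/2 : ℝ) * pd (pd L b) a z := fun a b => rfl
  have hgsm : ∀ a b : Fin 4, ContDiffOn ℝ (⊤ : ℕ∞) (fun z => Lmetric L z a b) U := by
    intro a b
    rw [hgeq]
    exact contDiffOn_const.mul (pd_contDiffOn hUopen (pd_contDiffOn hUopen hLs b) a)
  have hgd : ∀ z ∈ U, ∀ a b : Fin 4, DifferentiableAt ℝ (fun w => Lmetric L w a b) z :=
    fun z hz a b => pd_diffAt hUopen (hgsm a b) hz
  have hLd : ∀ z ∈ U, DifferentiableAt ℝ L z := fun z hz => pd_diffAt hUopen hLs hz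
  have hfd : ∀ z ∈ U, DifferentiableAt ℝ f z := fun z hz => pd_diffAt hUopen hfs hz
  have hpdLsm : ∀ i : Fin 4, ContDiffOn ℝ (⊤ : ℕ∞) (pd L i) U := fun i => pd_contDiffOn hUopen hLs i
  have hpdfsm : ∀ i : Fin 4, ContDiffOn ℝ (⊤ : ℕ∞) (pd f i) U := fun i => pd_contDiffOn hUopen hfs i
  have hpdLd : ∀ z ∈ U, ∀ i : Fin 4, DifferentiableAt ℝ (pd L i) z :=
    fun z hz i => pd_diffAt hUopen (hpdLsm i) hz
  have hpdfd : ∀ z ∈ U, ∀ i : Fin 4, DifferentiableAt ℝ (pd f i) z :=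
    fun z hz i => pd_diffAt hUopen (hpdfsm i) hz
  have hpdpdLd : ∀ z ∈ U, ∀ i j : Fin 4, DifferentiableAt ℝ (pd (pd L i) j) z :=
    fun z hz i j => pd_diffAt hUopen (pd_contDiffOn hUopen (hpdLsm i) j) hz
  have hpdpdfd : ∀ z ∈ U, ∀ i j : Fin 4, DifferentiableAt ℝ (pd (pd f i) j) z :=
    fun z hz i j => pd_diffAt hUopen (pd_contDiffOn hUopen (hpdfsm i) j) hz
  -- Euler facts
  have hEL : ∑ i, y i * pd L i y = 2 * L y := by
    have hc : HasDerivAt (fun l : ℝ => l ^ 2) 2 1 := by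
      simpa using hasDerivAt_pow 2 (1:ℝ)
    exact euler hUopen hLs hy hc (fun l hl => hhom y hy l hl)
  have hpdLhom : ∀ i : Fin 4, ∀ z ∈ U, ∀ l : ℝ, 0 < l →
      pd L i (l • z) = (l ^ 2 / l) * pd L i z :=
    fun i z hz l hl => pd_homog hUopen hUconic hLs (c := fun l => l ^ 2)
      (fun z hz l hl => hhom z hz l hl) i z hz l hl
  have hELi : ∀ i : Fin 4, ∑ j, y j * pd (pd L i) j y = pd L i y := by
    intro i
    have hc : HasDerivAt (fun l : ℝ => l ^ 2 / l) 1 1 := by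
      have h := (hasDerivAt_pow 2 (1:ℝ)).div (hasDerivAt_id (1:ℝ)) one_ne_zero
      norm_num at h
      exact h
    have := euler hUopen (hpdLsm i) hy hc (fun l hl => hpdLhom i y hy l hl)
    simpa using this
  have hEf : ∑ i, y i * pd f i y = 0 := by
    have hc : HasDerivAt (fun _ : ℝ => (1:ℝ)) 0 1 := hasDerivAt_const 1 1
    have := euler hUopen hfs hy hc (fun l hl => by rw [hfhom y hy l hl, one_mul])
    simpa using this
  have hpdfhom : ∀ i : Fin 4, ∀ z ∈ U, ∀ l : ℝ, 0 < l →
      pd f i (l • z) = ((1:ℝ) / l) * pd f i z :=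
    fun i z hz l hl => pd_homog hUopen hUconic hfs (c := fun _ => (1:ℝ))
      (fun z hz l hl => by rw [hfhom z hz l hl, one_mul]) i z hz l hl
  have hEfi : ∀ i : Fin 4, ∑ j, y j * pd (pd f i) j y = -(pd f i y) := by
    intro i
    have hc : HasDerivAt (fun l : ℝ => (1:ℝ) / l) (-1) 1 := by
      have h := (hasDerivAt_const (1:ℝ) (1:ℝ)).div (hasDerivAt_id (1:ℝ)) one_ne_zero
      norm_num at h
      exact h
    have := euler hUopen (hpdfsm i) hy hc (fun l hl => hpdfhom i y hy l hl)
    simpa using this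
  -- symmetries
  have hAsym : ∀ a b : Fin 4, Lmetric L y a b = Lmetric L y b a := by
    intro a b
    show (1/2 : ℝ) * pd (pd L b) a y = (1/2 : ℝ) * pd (pd L a) b y
    rw [pd_comm hUopen hLs hy b a]
  have hgisym : ∀ a b : Fin 4, (Lmetric L y)⁻¹ a b = (Lmetric L y)⁻¹ b a := by
    intro a b
    have hAT : (Lmetric L y)ᵀ = Lmetric L y := Matrix.ext fun a b => hAsym b a
    conv_lhs => rw [← hAT, ← Matrix.transpose_nonsing_inv, Matrix.transpose_apply]
  have hmul1 : ∀ a b : Fin 4, ∑ k, (Lmetric L y)⁻¹ a k * Lmetric L y k b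
      = if a = b then (1:ℝ) else 0 := by
    intro a b
    have h := Matrix.nonsing_inv_mul (Lmetric L y) (hinv y hy)
    have h2 := congrFun (congrFun h a) b
    rw [Matrix.mul_apply] at h2
    rw [h2, Matrix.one_apply]
  have hmul2 : ∀ a b : Fin 4, ∑ k, Lmetric L y a k * (Lmetric L y)⁻¹ k b
      = if a = b then (1:ℝ) else 0 := by
    intro a b
    have h := Matrix.mul_nonsing_inv (Lmetric L y) (hinv y hy)
    have h2 := congrFun (congrFun h a) b
    rw [Matrix.mul_apply] at h2
    rw [h2, Matrix.one_apply]
    -- contraction identities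
  have hAy : ∀ i : Fin 4, ∑ j, Lmetric L y i j * y j = (1/2 : ℝ) * pd L i y := by
    intro i
    have h1 : ∀ j : Fin 4, Lmetric L y i j = (1/2 : ℝ) * pd (pd L i) j y := by
      intro j
      show (1/2 : ℝ) * pd (pd L j) i y = _
      rw [pd_comm hUopen hLs hy j i]
    calc ∑ j, Lmetric L y i j * y j
        = ∑ j, (1/2 : ℝ) * (y j * pd (pd L i) j y) := by
          refine Finset.sum_congr rfl fun j _ => ?_; rw [h1 j]; ring
      _ = (1/2 : ℝ) * ∑ j, y j * pd (pd L i) j y := by rw [Finset.mul_sum]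
      _ = (1/2 : ℝ) * pd L i y := by rw [hELi i]
  have hgiLi : ∀ i : Fin 4, ∑ j, (Lmetric L y)⁻¹ i j * pd L j y = 2 * y i := by
    intro i
    have step1 : ∀ j : Fin 4, (Lmetric L y)⁻¹ i j * pd L j y
        = ∑ k, (Lmetric L y)⁻¹ i j * Lmetric L y j k * (2 * y k) := by
      intro j
      have h2 : 2 * ∑ k, Lmetric L y j k * y k = pd L j y := by rw [hAy j]; ring
      rw [← h2, Finset.mul_sum, Finset.mul_sum]
      exact Finset.sum_congr rfl fun k _ => by ring
    calc ∑ j, (Lmetric L y)⁻¹ i j * pd L j y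
        = ∑ j, ∑ k, (Lmetric L y)⁻¹ i j * Lmetric L y j k * (2 * y k) :=
          Finset.sum_congr rfl fun j _ => step1 j
      _ = ∑ k, ∑ j, (Lmetric L y)⁻¹ i j * Lmetric L y j k * (2 * y k) :=
          Finset.sum_comm
      _ = ∑ k, (∑ j, (Lmetric L y)⁻¹ i j * Lmetric L y j k) * (2 * y k) :=
          Finset.sum_congr rfl fun k _ => (Finset.sum_mul _ _ _).symm
      _ = ∑ k, (if i = k then (1:ℝ) else 0) * (2 * y k) :=
          Finset.sum_congr rfl fun k _ => by rw [hmul1 i k]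
      _ = 2 * y i := by simp
  -- third-derivative tensor symmetries
  have hTs1 : ∀ m a b : Fin 4, pd (fun z => Lmetric L z a b) m y
      = pd (fun z => Lmetric L z b a) m y := by
    intro m a b
    refine pd_congr_on hUopen (fun z hz => ?_) hy m
    show (1/2 : ℝ) * pd (pd L b) a z = (1/2 : ℝ) * pd (pd L a) b z
    rw [pd_comm hUopen hLs hz b a]
  have hTs2 : ∀ m a b : Fin 4, pd (fun z => Lmetric L z a b) m y
      = pd (fun z => Lmetric L z m b) a y := by
    intro m a b
    have e1 : pd (fun z => Lmetric L z a b) m y = (1/2 : ℝ) * pd (pd (pd L b) a) m y := by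
      rw [show (fun z => Lmetric L z a b) = fun z => (1/2 : ℝ) * pd (pd L b) a z from rfl]
      exact pd_const_mul (hpdpdLd y hy b a) _ m
    have e2 : pd (fun z => Lmetric L z m b) a y = (1/2 : ℝ) * pd (pd (pd L b) m) a y := by
      rw [show (fun z => Lmetric L z m b) = fun z => (1/2 : ℝ) * pd (pd L b) m z from rfl]
      exact pd_const_mul (hpdpdLd y hy b m) _ a
    rw [e1, e2, pd_comm hUopen (hpdLsm b) hy a m]
  have hTs13 : ∀ m a b : Fin 4, pd (fun z => Lmetric L z a b) m y
      = pd (fun z => Lmetric L z a m) b y := by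
    intro m a b
    rw [hTs2 m a b, hTs1 a m b]
    exact hTs2 a b m
  -- Hf symmetry
  have hHfsym : ∀ a b : Fin 4, pd (pd f b) a y = pd (pd f a) b y :=
    fun a b => pd_comm hUopen hfs hy b a
    -- expansion of second derivatives of L*f
  have hP : ∀ i j : Fin 4, pd (pd (fun z => L z * f z) j) i y
      = 2 * Lmetric L y i j * f y + pd L j y * pd f i y + pd L i y * pd f j y
        + L y * pd (pd f j) i y := by
    intro i j
    have h1 : ∀ z ∈ U, pd (fun w => L w * f w) j z = pd L j z * f z + L z * pd f j z :=
      fun z hz => pd_mul (hLd z hz) (hfd z hz) j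
    rw [pd_congr_on hUopen h1 hy i]
    have d1 : DifferentiableAt ℝ (fun z => pd L j z * f z) y := (hpdLd y hy j).mul (hfd y hy)
    have d2 : DifferentiableAt ℝ (fun z => L z * pd f j z) y := (hLd y hy).mul (hpdfd y hy j)
    rw [pd_add d1 d2 i, pd_mul (hpdLd y hy j) (hfd y hy) i, pd_mul (hLd y hy) (hpdfd y hy j) i]
    have hA : pd (pd L j) i y = 2 * Lmetric L y i j := by
      show _ = 2 * ((1/2 : ℝ) * pd (pd L j) i y); ring
    rw [hA]; ring
  -- Part 1 of LHS
  have hPart1 : ∑ i, ∑ j, (Lmetric L y)⁻¹ i j * pd (pd (fun z => L z * f z) j) i y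
      = 8 * f y + L y * ∑ i, ∑ j, (Lmetric L y)⁻¹ i j * pd (pd f j) i y := by
    have expand : ∀ i j : Fin 4, (Lmetric L y)⁻¹ i j * pd (pd (fun z => L z * f z) j) i y
        = ((Lmetric L y)⁻¹ i j * Lmetric L y i j) * (2 * f y)
          + ((Lmetric L y)⁻¹ i j * pd L j y) * pd f i y
          + ((Lmetric L y)⁻¹ i j * pd L i y) * pd f j y
          + L y * ((Lmetric L y)⁻¹ i j * pd (pd f j) i y) := by
      intro i j; rw [hP i j]; ring
    have c1 : ∑ i, ∑ j, ((Lmetric L y)⁻¹ i j * Lmetric L y i j) * (2 * f y) = 8 * f y := by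
      have per : ∀ i : Fin 4, ∑ j, ((Lmetric L y)⁻¹ i j * Lmetric L y i j) * (2 * f y)
          = 2 * f y := by
        intro i
        calc ∑ j, ((Lmetric L y)⁻¹ i j * Lmetric L y i j) * (2 * f y)
            = (∑ j, (Lmetric L y)⁻¹ i j * Lmetric L y j i) * (2 * f y) := by
              rw [Finset.sum_mul]
              exact Finset.sum_congr rfl fun j _ => by rw [hAsym i j]
          _ = (if i = i then (1:ℝ) else 0) * (2 * f y) := by rw [hmul1 i i]
          _ = 2 * f y := by simp
      rw [Finset.sum_congr rfl fun i _ => per i]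
      simp only [Finset.sum_const, Finset.card_univ, Fintype.card_fin, nsmul_eq_mul]
      push_cast
      ring
    have c2 : ∑ i, ∑ j, ((Lmetric L y)⁻¹ i j * pd L j y) * pd f i y = 0 := by
      have per : ∀ i : Fin 4, ∑ j, ((Lmetric L y)⁻¹ i j * pd L j y) * pd f i y
          = 2 * (y i * pd f i y) := by
        intro i
        rw [← Finset.sum_mul, hgiLi i]; ring
      rw [Finset.sum_congr rfl fun i _ => per i, ← Finset.mul_sum, hEf, mul_zero]
    have c3 : ∑ i, ∑ j, ((Lmetric L y)⁻¹ i j * pd L i y) * pd f j y = 0 := by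
      rw [Finset.sum_comm]
      have per : ∀ j : Fin 4, ∑ i, ((Lmetric L y)⁻¹ i j * pd L i y) * pd f j y
          = 2 * (y j * pd f j y) := by
        intro j
        have : ∑ i, (Lmetric L y)⁻¹ i j * pd L i y = 2 * y j := by
          rw [Finset.sum_congr rfl fun i (_ : i ∈ Finset.univ) => by rw [hgisym i j]]
          exact hgiLi j
        rw [← Finset.sum_mul, this]; ring
      rw [Finset.sum_congr rfl fun j _ => per j, ← Finset.mul_sum, hEf, mul_zero]
    have c4 : ∑ i, ∑ j, L y * ((Lmetric L y)⁻¹ i j * pd (pd f j) i y)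
        = L y * ∑ i, ∑ j, (Lmetric L y)⁻¹ i j * pd (pd f j) i y := by
      rw [Finset.mul_sum]
      exact Finset.sum_congr rfl fun i _ => by rw [Finset.mul_sum]
    calc ∑ i, ∑ j, (Lmetric L y)⁻¹ i j * pd (pd (fun z => L z * f z) j) i y
        = ∑ i, ∑ j, (((Lmetric L y)⁻¹ i j * Lmetric L y i j) * (2 * f y)
          + ((Lmetric L y)⁻¹ i j * pd L j y) * pd f i y
          + ((Lmetric L y)⁻¹ i j * pd L i y) * pd f j y
          + L y * ((Lmetric L y)⁻¹ i j * pd (pd f j) i y)) :=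
          Finset.sum_congr rfl fun i _ => Finset.sum_congr rfl fun j _ => expand i j
      _ = 8 * f y + L y * ∑ i, ∑ j, (Lmetric L y)⁻¹ i j * pd (pd f j) i y := by
          simp only [Finset.sum_add_distrib]
          rw [c1, c2, c3, c4]; ring
  -- Part 2 of LHS
  have hPart2 : ∑ i, ∑ j, (4 * y i * y j / L y) * pd (pd (fun z => L z * f z) j) i y
      = 8 * f y := by
    have expand : ∀ i j : Fin 4, (4 * y i * y j / L y) * pd (pd (fun z => L z * f z) j) i y
        = (4 / L y) * (2 * f y * (y i * (y j * Lmetric L y i j)))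
          + (4 / L y) * ((y j * pd L j y) * (y i * pd f i y))
          + (4 / L y) * ((y i * pd L i y) * (y j * pd f j y))
          + 4 * (y i * (y j * pd (pd f j) i y)) := by
      intro i j; rw [hP i j]; field_simp
    have d1 : ∑ i, ∑ j, (4 / L y) * (2 * f y * (y i * (y j * Lmetric L y i j)))
        = (4 / L y) * (2 * f y * L y) := by
      have hyyA : ∑ i, ∑ j, y i * (y j * Lmetric L y i j) = L y := by
        have per : ∀ i : Fin 4, ∑ j, y i * (y j * Lmetric L y i j)
            = y i * ((1/2 : ℝ) * pd L i y) := by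
          intro i
          rw [← hAy i, Finset.mul_sum]
          exact Finset.sum_congr rfl fun j _ => by ring
        rw [Finset.sum_congr rfl fun i _ => per i]
        have : ∑ i, y i * ((1/2 : ℝ) * pd L i y) = (1/2 : ℝ) * ∑ i, y i * pd L i y := by
          rw [Finset.mul_sum]
          exact Finset.sum_congr rfl fun i _ => by ring
        rw [this, hEL]; ring
      calc ∑ i, ∑ j, (4 / L y) * (2 * f y * (y i * (y j * Lmetric L y i j)))
          = ∑ i, ∑ j, ((4 / L y) * (2 * f y)) * (y i * (y j * Lmetric L y i j)) :=
            Finset.sum_congr rfl fun i _ => Finset.sum_congr rfl fun j _ => by ring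
        _ = ((4 / L y) * (2 * f y)) * ∑ i, ∑ j, y i * (y j * Lmetric L y i j) :=
            (dsum_mul_left _ _).symm
        _ = (4 / L y) * (2 * f y * L y) := by rw [hyyA]; ring
    have d2 : ∑ i, ∑ j, (4 / L y) * ((y j * pd L j y) * (y i * pd f i y)) = 0 := by
      have per : ∀ i : Fin 4, ∑ j, (4 / L y) * ((y j * pd L j y) * (y i * pd f i y))
          = (4 / L y) * (2 * L y) * (y i * pd f i y) := by
        intro i
        calc ∑ j, (4 / L y) * ((y j * pd L j y) * (y i * pd f i y))
            = (∑ j, y j * pd L j y) * ((4 / L y) * (y i * pd f i y)) := by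
              rw [Finset.sum_mul]
              exact Finset.sum_congr rfl fun j _ => by ring
          _ = (4 / L y) * (2 * L y) * (y i * pd f i y) := by rw [hEL]; ring
      rw [Finset.sum_congr rfl fun i _ => per i, ← Finset.mul_sum, hEf, mul_zero]
    have d3 : ∑ i, ∑ j, (4 / L y) * ((y i * pd L i y) * (y j * pd f j y)) = 0 := by
      have per : ∀ i : Fin 4, ∑ j, (4 / L y) * ((y i * pd L i y) * (y j * pd f j y))
          = (4 / L y) * (y i * pd L i y) * 0 := by
        intro i
        rw [← hEf, Finset.mul_sum]
        exact Finset.sum_congr rfl fun j _ => by ring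
      rw [Finset.sum_congr rfl fun i _ => per i]
      simp
    have d4 : ∑ i, ∑ j, 4 * (y i * (y j * pd (pd f j) i y)) = 0 := by
      have per : ∀ i : Fin 4, ∑ j, 4 * (y i * (y j * pd (pd f j) i y))
          = 4 * (y i * (-(pd f i y))) := by
        intro i
        have hsw : ∑ j, y j * pd (pd f j) i y = -(pd f i y) := by
          rw [Finset.sum_congr rfl fun j (_ : j ∈ Finset.univ) => by rw [hHfsym i j]]
          exact hEfi i
        rw [← hsw, Finset.mul_sum, Finset.mul_sum]
        all_goals exact Finset.sum_congr rfl fun j _ => by ring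
      rw [Finset.sum_congr rfl fun i _ => per i]
      have : ∑ i, 4 * (y i * (-(pd f i y))) = -4 * ∑ i, y i * pd f i y := by
        rw [Finset.mul_sum]
        all_goals exact Finset.sum_congr rfl fun i _ => by ring
      rw [this, hEf, mul_zero]
    calc ∑ i, ∑ j, (4 * y i * y j / L y) * pd (pd (fun z => L z * f z) j) i y
        = ∑ i, ∑ j, ((4 / L y) * (2 * f y * (y i * (y j * Lmetric L y i j)))
          + (4 / L y) * ((y j * pd L j y) * (y i * pd f i y))
          + (4 / L y) * ((y i * pd L i y) * (y j * pd f j y))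
          + 4 * (y i * (y j * pd (pd f j) i y))) :=
          Finset.sum_congr rfl fun i _ => Finset.sum_congr rfl fun j _ => expand i j
      _ = (4 / L y) * (2 * f y * L y) + 0 + 0 + 0 := by
          simp only [Finset.sum_add_distrib]
          rw [d1, d2, d3, d4]
      _ = 8 * f y := by field_simp; ring
  -- LHS final
  have hLHS : (∑ i, ∑ j, ((Lmetric L y)⁻¹ i j - 4 * y i * y j / L y) *
        pd (pd (fun z => L z * f z) j) i y) * (Lmetric L y).det / (L y) ^ 2
      = (∑ i, ∑ j, (Lmetric L y)⁻¹ i j * pd (pd f j) i y) * (Lmetric L y).det / L y := by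
    have hsplit : ∑ i, ∑ j, ((Lmetric L y)⁻¹ i j - 4 * y i * y j / L y) *
          pd (pd (fun z => L z * f z) j) i y
        = (∑ i, ∑ j, (Lmetric L y)⁻¹ i j * pd (pd (fun z => L z * f z) j) i y)
          - ∑ i, ∑ j, (4 * y i * y j / L y) * pd (pd (fun z => L z * f z) j) i y := by
      rw [← Finset.sum_sub_distrib]
      refine Finset.sum_congr rfl fun i _ => ?_
      rw [← Finset.sum_sub_distrib]
      exact Finset.sum_congr rfl fun j _ => by ring
    rw [hsplit, hPart1, hPart2]
    field_simp
    ring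
    -- inverse matrix entries: representation and differentiability
  have hNfun : ∀ j k : Fin 4, (fun z => (Lmetric L z)⁻¹ j k)
      = fun z => ((Lmetric L z).det)⁻¹ * (Lmetric L z).adjugate j k := by
    intro j k
    funext z
    rw [Matrix.inv_def, Matrix.smul_apply, Ring.inverse_eq_inv, smul_eq_mul]
  have hadjd : ∀ z ∈ U, ∀ j k : Fin 4,
      DifferentiableAt ℝ (fun w => (Lmetric L w).adjugate j k) z := by
    intro z hz j k
    have hrw : (fun w => (Lmetric L w).adjugate j k)
        = fun w => ((Lmetric L w).updateRow k (Pi.single j 1)).det := by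
      funext w; rw [Matrix.adjugate_apply]
    rw [hrw]
    refine diffAt_det (fun a b => ?_)
    by_cases hak : a = k
    · subst hak
      have : (fun w => ((Lmetric L w).updateRow a (Pi.single j 1)) a b)
          = fun _ : Fin 4 → ℝ => (Pi.single j (1:ℝ) : Fin 4 → ℝ) b := by
        funext w; rw [Matrix.updateRow_apply, if_pos rfl]
      rw [this]; exact differentiableAt_const _
    · have : (fun w => ((Lmetric L w).updateRow k (Pi.single j 1)) a b)
          = fun w => Lmetric L w a b := by
        funext w; rw [Matrix.updateRow_apply, if_neg hak]
      rw [this]; exact hgd z hz a b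
  have hdetd : ∀ z ∈ U, DifferentiableAt ℝ (fun w => (Lmetric L w).det) z :=
    fun z hz => diffAt_det (fun a b => hgd z hz a b)
  have hdetne : ∀ z ∈ U, (Lmetric L z).det ≠ 0 := fun z hz => (hinv z hz).ne_zero
  have hNd : ∀ z ∈ U, ∀ j k : Fin 4,
      DifferentiableAt ℝ (fun w => (Lmetric L w)⁻¹ j k) z := by
    intro z hz j k
    rw [hNfun j k]
    exact ((hdetd z hz).inv (hdetne z hz)).mul (hadjd z hz j k)
  -- adjugate at y in terms of inverse
  have hadjA : ∀ k a : Fin 4, (Lmetric L y).adjugate k a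
      = (Lmetric L y).det * (Lmetric L y)⁻¹ k a := by
    intro k a
    have h1 : (Lmetric L y)⁻¹ k a = ((Lmetric L y).det)⁻¹ * (Lmetric L y).adjugate k a :=
      congrFun (hNfun k a) y
    rw [h1, ← mul_assoc, mul_inv_cancel₀ hDne, one_mul]
  -- Jacobi formula at y
  have hpdD : ∀ m : Fin 4, pd (fun z => (Lmetric L z).det) m y
      = ∑ k, ∑ a, ((Lmetric L y).det * (Lmetric L y)⁻¹ k a) *
          pd (fun z => Lmetric L z a k) m y := by
    intro m
    rw [pd_det (fun a b => hgd y hy a b) m]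
    exact Finset.sum_congr rfl fun k _ => Finset.sum_congr rfl fun a _ => by rw [hadjA k a]
  -- derivative of inverse entries
  have hpdNA : ∀ m j b : Fin 4,
      ∑ k, (pd (fun z => (Lmetric L z)⁻¹ j k) m y * Lmetric L y k b
        + (Lmetric L y)⁻¹ j k * pd (fun z => Lmetric L z k b) m y) = 0 := by
    intro m j b
    have hfun : ∀ z ∈ U, ∑ k, (Lmetric L z)⁻¹ j k * Lmetric L z k b
        = (if j = b then (1:ℝ) else 0) := by
      intro z hz
      have h := Matrix.nonsing_inv_mul (Lmetric L z) (hinv z hz)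
      have h2 := congrFun (congrFun h j) b
      rw [Matrix.mul_apply] at h2
      rw [h2, Matrix.one_apply]
    have hL2 : pd (fun z => ∑ k, (Lmetric L z)⁻¹ j k * Lmetric L z k b) m y = 0 := by
      rw [pd_congr_on hUopen hfun hy m]
      exact pd_const _ m y
    rw [← hL2]
    rw [pd_sum _ (fun k _ => (hNd y hy j k).fun_mul (hgd y hy k b)) m]
    exact Finset.sum_congr rfl fun k _ =>
      (pd_mul (hNd y hy j k) (hgd y hy k b) m).symm
  have hpdN : ∀ m j c : Fin 4, pd (fun z => (Lmetric L z)⁻¹ j c) m y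
      = -∑ b, ∑ k, (Lmetric L y)⁻¹ j k * pd (fun z => Lmetric L z k b) m y
          * (Lmetric L y)⁻¹ b c := by
    intro m j c
    have key : ∀ b : Fin 4, ∑ k, pd (fun z => (Lmetric L z)⁻¹ j k) m y * Lmetric L y k b
        = -∑ k, (Lmetric L y)⁻¹ j k * pd (fun z => Lmetric L z k b) m y := by
      intro b
      have h := hpdNA m j b
      rw [Finset.sum_add_distrib] at h
      linarith [h]
    calc pd (fun z => (Lmetric L z)⁻¹ j c) m y
        = ∑ k, pd (fun z => (Lmetric L z)⁻¹ j k) m y * (if k = c then (1:ℝ) else 0) := by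
          simp
      _ = ∑ k, pd (fun z => (Lmetric L z)⁻¹ j k) m y * ∑ b, Lmetric L y k b
            * (Lmetric L y)⁻¹ b c := by
          refine Finset.sum_congr rfl fun k _ => ?_
          rw [show ∑ b, Lmetric L y k b * (Lmetric L y)⁻¹ b c = if k = c then (1:ℝ) else 0
            from hmul2 k c]
      _ = ∑ k, ∑ b, pd (fun z => (Lmetric L z)⁻¹ j k) m y
            * (Lmetric L y k b * (Lmetric L y)⁻¹ b c) := by
          refine Finset.sum_congr rfl fun k _ => ?_
          rw [Finset.mul_sum]
          all_goals exact Finset.sum_congr rfl fun b _ => by ring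
      _ = ∑ b, ∑ k, pd (fun z => (Lmetric L z)⁻¹ j k) m y
            * (Lmetric L y k b * (Lmetric L y)⁻¹ b c) := Finset.sum_comm
      _ = ∑ b, (∑ k, pd (fun z => (Lmetric L z)⁻¹ j k) m y * Lmetric L y k b)
            * (Lmetric L y)⁻¹ b c := by
          refine Finset.sum_congr rfl fun b _ => ?_
          rw [Finset.sum_mul]
          exact Finset.sum_congr rfl fun k _ => by ring
      _ = ∑ b, (-∑ k, (Lmetric L y)⁻¹ j k * pd (fun z => Lmetric L z k b) m y)
            * (Lmetric L y)⁻¹ b c :=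
          Finset.sum_congr rfl fun b _ => by rw [key b]
      _ = -∑ b, ∑ k, (Lmetric L y)⁻¹ j k * pd (fun z => Lmetric L z k b) m y
            * (Lmetric L y)⁻¹ b c := by
          rw [← Finset.sum_neg_distrib]
          refine Finset.sum_congr rfl fun b _ => ?_
          rw [neg_mul, Finset.sum_mul]
    -- derivative of each divergence term
  have hRHSj : ∀ j : Fin 4,
      fderiv ℝ (fun z => (∑ i, (Lmetric L z)⁻¹ j i * pd f i z) * (Lmetric L z).det / L z) y
        (Pi.single j 1)
      = ((∑ i, (pd (fun z => (Lmetric L z)⁻¹ j i) j y * pd f i y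
            + (Lmetric L y)⁻¹ j i * pd (pd f i) j y)) * (Lmetric L y).det
          + (∑ i, (Lmetric L y)⁻¹ j i * pd f i y) * pd (fun z => (Lmetric L z).det) j y)
          * (L y)⁻¹
        + ((∑ i, (Lmetric L y)⁻¹ j i * pd f i y) * (Lmetric L y).det)
          * (-(pd L j y) / (L y) ^ 2) := by
    intro j
    have hSd : DifferentiableAt ℝ (fun z => ∑ i, (Lmetric L z)⁻¹ j i * pd f i z) y :=
      DifferentiableAt.fun_sum fun i _ => (hNd y hy j i).fun_mul (hpdfd y hy i)
    have hF1d : DifferentiableAt ℝ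
        (fun z => (∑ i, (Lmetric L z)⁻¹ j i * pd f i z) * (Lmetric L z).det) y :=
      hSd.mul (hdetd y hy)
    have hrw : (fun z => (∑ i, (Lmetric L z)⁻¹ j i * pd f i z) * (Lmetric L z).det / L z)
        = fun z => ((∑ i, (Lmetric L z)⁻¹ j i * pd f i z) * (Lmetric L z).det) * (L z)⁻¹ := by
      funext z; rw [div_eq_mul_inv]
    show pd (fun z => (∑ i, (Lmetric L z)⁻¹ j i * pd f i z) * (Lmetric L z).det / L z) j y = _
    rw [hrw, pd_mul hF1d ((hLd y hy).fun_inv hLy) j, pd_inv (hLd y hy) hLy j,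
        pd_mul hSd (hdetd y hy) j,
        pd_sum _ (fun i _ => (hNd y hy j i).fun_mul (hpdfd y hy i)) j,
        Finset.sum_congr rfl fun i _ => pd_mul (hNd y hy j i) (hpdfd y hy i) j]
    -- assemble
  rw [hLHS, Finset.sum_congr rfl fun j _ => hRHSj j]
  have hsummand : ∀ j : Fin 4,
      ((∑ i, (pd (fun z => (Lmetric L z)⁻¹ j i) j y * pd f i y
            + (Lmetric L y)⁻¹ j i * pd (pd f i) j y)) * (Lmetric L y).det
          + (∑ i, (Lmetric L y)⁻¹ j i * pd f i y) * pd (fun z => (Lmetric L z).det) j y)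
          * (L y)⁻¹
        + ((∑ i, (Lmetric L y)⁻¹ j i * pd f i y) * (Lmetric L y).det)
          * (-(pd L j y) / (L y) ^ 2)
      = (∑ i, (Lmetric L y)⁻¹ j i * pd (pd f i) j y) * ((Lmetric L y).det * (L y)⁻¹)
        + ((∑ i, pd (fun z => (Lmetric L z)⁻¹ j i) j y * pd f i y) * (Lmetric L y).det
            + (∑ i, (Lmetric L y)⁻¹ j i * pd f i y) * pd (fun z => (Lmetric L z).det) j y)
            * (L y)⁻¹
        + ((∑ i, (Lmetric L y)⁻¹ j i * pd f i y) * pd L j y)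
            * (-(Lmetric L y).det / (L y) ^ 2) := by
    intro j
    rw [Finset.sum_add_distrib]
    ring
  rw [Finset.sum_congr rfl fun j _ => hsummand j]
  rw [Finset.sum_add_distrib, Finset.sum_add_distrib]
  -- the three pieces
  have hE3 : ∑ j, ((∑ i, (Lmetric L y)⁻¹ j i * pd f i y) * pd L j y)
      * (-(Lmetric L y).det / (L y) ^ 2) = 0 := by
    have hz1 : ∑ j, (∑ i, (Lmetric L y)⁻¹ j i * pd f i y) * pd L j y = 0 := by
      have step : ∀ j : Fin 4, (∑ i, (Lmetric L y)⁻¹ j i * pd f i y) * pd L j y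
          = ∑ i, (Lmetric L y)⁻¹ j i * pd f i y * pd L j y := by
        intro j; rw [Finset.sum_mul]
      rw [Finset.sum_congr rfl fun j _ => step j, Finset.sum_comm]
      have per : ∀ i : Fin 4, ∑ j, (Lmetric L y)⁻¹ j i * pd f i y * pd L j y
          = pd f i y * (2 * y i) := by
        intro i
        calc ∑ j, (Lmetric L y)⁻¹ j i * pd f i y * pd L j y
            = ∑ j, pd f i y * ((Lmetric L y)⁻¹ i j * pd L j y) :=
              Finset.sum_congr rfl fun j _ => by rw [hgisym j i]; ring
          _ = pd f i y * ∑ j, (Lmetric L y)⁻¹ i j * pd L j y := (Finset.mul_sum _ _ _).symm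
          _ = pd f i y * (2 * y i) := by rw [hgiLi i]
      rw [Finset.sum_congr rfl fun i _ => per i]
      calc ∑ i, pd f i y * (2 * y i) = 2 * ∑ i, y i * pd f i y := by
            rw [Finset.mul_sum]
            exact Finset.sum_congr rfl fun i _ => by ring
        _ = 0 := by rw [hEf, mul_zero]
    calc ∑ j, ((∑ i, (Lmetric L y)⁻¹ j i * pd f i y) * pd L j y)
          * (-(Lmetric L y).det / (L y) ^ 2)
        = (∑ j, (∑ i, (Lmetric L y)⁻¹ j i * pd f i y) * pd L j y)
          * (-(Lmetric L y).det / (L y) ^ 2) := (Finset.sum_mul _ _ _).symm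
      _ = 0 := by rw [hz1, zero_mul]
  have hE2 : ∑ j, ((∑ i, pd (fun z => (Lmetric L z)⁻¹ j i) j y * pd f i y) * (Lmetric L y).det
      + (∑ i, (Lmetric L y)⁻¹ j i * pd f i y) * pd (fun z => (Lmetric L z).det) j y)
      * (L y)⁻¹ = 0 := by
    have hA : ∀ j : Fin 4, ∑ i, pd (fun z => (Lmetric L z)⁻¹ j i) j y * pd f i y
        = -∑ b, ∑ k, (Lmetric L y)⁻¹ j k * pd (fun z => Lmetric L z k b) j y
            * (∑ i, (Lmetric L y)⁻¹ b i * pd f i y) := by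
      intro j
      calc ∑ i, pd (fun z => (Lmetric L z)⁻¹ j i) j y * pd f i y
          = ∑ i, (-∑ b, ∑ k, (Lmetric L y)⁻¹ j k * pd (fun z => Lmetric L z k b) j y
              * (Lmetric L y)⁻¹ b i) * pd f i y :=
            Finset.sum_congr rfl fun i _ => by rw [hpdN j j i]
        _ = -∑ i, ∑ b, ∑ k, (Lmetric L y)⁻¹ j k * pd (fun z => Lmetric L z k b) j y
              * (Lmetric L y)⁻¹ b i * pd f i y := by
            rw [← Finset.sum_neg_distrib]
            refine Finset.sum_congr rfl fun i _ => ?_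
            rw [neg_mul, Finset.sum_mul]
            congr 1
            refine Finset.sum_congr rfl fun b _ => ?_
            rw [Finset.sum_mul]
        _ = -∑ b, ∑ i, ∑ k, (Lmetric L y)⁻¹ j k * pd (fun z => Lmetric L z k b) j y
              * (Lmetric L y)⁻¹ b i * pd f i y := by
            congr 1; exact Finset.sum_comm
        _ = -∑ b, ∑ k, ∑ i, (Lmetric L y)⁻¹ j k * pd (fun z => Lmetric L z k b) j y
              * (Lmetric L y)⁻¹ b i * pd f i y := by
            congr 1; exact Finset.sum_congr rfl fun b _ => Finset.sum_comm
        _ = -∑ b, ∑ k, (Lmetric L y)⁻¹ j k * pd (fun z => Lmetric L z k b) j y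
              * (∑ i, (Lmetric L y)⁻¹ b i * pd f i y) := by
            congr 1
            refine Finset.sum_congr rfl fun b _ => Finset.sum_congr rfl fun k _ => ?_
            rw [Finset.mul_sum]
            exact Finset.sum_congr rfl fun i _ => by ring
    have hB : ∀ j : Fin 4, (∑ i, (Lmetric L y)⁻¹ j i * pd f i y)
          * pd (fun z => (Lmetric L z).det) j y
        = ∑ k, ∑ a, ((Lmetric L y)⁻¹ k a * pd (fun z => Lmetric L z a k) j y
            * (∑ i, (Lmetric L y)⁻¹ j i * pd f i y)) * (Lmetric L y).det := by
      intro j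
      rw [hpdD j, Finset.mul_sum]
      refine Finset.sum_congr rfl fun k _ => ?_
      rw [Finset.mul_sum]
      exact Finset.sum_congr rfl fun a _ => by ring
    have hXY : ∑ j, ∑ b, ∑ k, (Lmetric L y)⁻¹ j k * pd (fun z => Lmetric L z k b) j y
          * (∑ i, (Lmetric L y)⁻¹ b i * pd f i y)
        = ∑ j, ∑ k, ∑ a, (Lmetric L y)⁻¹ k a * pd (fun z => Lmetric L z a k) j y
          * (∑ i, (Lmetric L y)⁻¹ j i * pd f i y) := by
      rw [Finset.sum_comm]
      refine Finset.sum_congr rfl fun b _ => Finset.sum_congr rfl fun j _ =>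
        Finset.sum_congr rfl fun k _ => ?_
      rw [hTs13 j k b]
    calc ∑ j, ((∑ i, pd (fun z => (Lmetric L z)⁻¹ j i) j y * pd f i y) * (Lmetric L y).det
        + (∑ i, (Lmetric L y)⁻¹ j i * pd f i y) * pd (fun z => (Lmetric L z).det) j y)
        * (L y)⁻¹
        = (∑ j, ((∑ i, pd (fun z => (Lmetric L z)⁻¹ j i) j y * pd f i y) * (Lmetric L y).det
          + (∑ i, (Lmetric L y)⁻¹ j i * pd f i y) * pd (fun z => (Lmetric L z).det) j y))
          * (L y)⁻¹ := (Finset.sum_mul _ _ _).symm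
      _ = 0 * (L y)⁻¹ := by
          congr 1
          rw [Finset.sum_add_distrib]
          have h1 : ∑ j, (∑ i, pd (fun z => (Lmetric L z)⁻¹ j i) j y * pd f i y)
              * (Lmetric L y).det
              = -∑ j, ∑ b, ∑ k, ((Lmetric L y)⁻¹ j k * pd (fun z => Lmetric L z k b) j y
                * (∑ i, (Lmetric L y)⁻¹ b i * pd f i y)) * (Lmetric L y).det := by
            rw [← Finset.sum_neg_distrib]
            refine Finset.sum_congr rfl fun j _ => ?_
            rw [hA j, neg_mul, Finset.sum_mul]
            congr 1
            refine Finset.sum_congr rfl fun b _ => ?_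
            rw [Finset.sum_mul]
          have h2 : ∑ j, (∑ i, (Lmetric L y)⁻¹ j i * pd f i y)
              * pd (fun z => (Lmetric L z).det) j y
              = ∑ j, ∑ k, ∑ a, ((Lmetric L y)⁻¹ k a * pd (fun z => Lmetric L z a k) j y
                * (∑ i, (Lmetric L y)⁻¹ j i * pd f i y)) * (Lmetric L y).det :=
            Finset.sum_congr rfl fun j _ => hB j
          rw [h1, h2]
          have h3 : ∑ j, ∑ b, ∑ k, ((Lmetric L y)⁻¹ j k * pd (fun z => Lmetric L z k b) j y
                * (∑ i, (Lmetric L y)⁻¹ b i * pd f i y)) * (Lmetric L y).det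
              = ∑ j, ∑ k, ∑ a, ((Lmetric L y)⁻¹ k a * pd (fun z => Lmetric L z a k) j y
                * (∑ i, (Lmetric L y)⁻¹ j i * pd f i y)) * (Lmetric L y).det := by
            have e1 : ∀ (G : Fin 4 → Fin 4 → Fin 4 → ℝ),
                ∑ j, ∑ b, ∑ k, (G j b k) * (Lmetric L y).det
                  = (∑ j, ∑ b, ∑ k, G j b k) * (Lmetric L y).det := by
              intro G
              rw [Finset.sum_mul]
              refine Finset.sum_congr rfl fun j _ => ?_
              rw [Finset.sum_mul]
              refine Finset.sum_congr rfl fun b _ => ?_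
              rw [Finset.sum_mul]
            rw [e1, e1, hXY]
          rw [h3]
          ring
      _ = 0 := zero_mul _
  rw [hE2, hE3, add_zero, add_zero]
  have hE1 : ∑ j, (∑ i, (Lmetric L y)⁻¹ j i * pd (pd f i) j y)
      * ((Lmetric L y).det * (L y)⁻¹)
      = (∑ i, ∑ j, (Lmetric L y)⁻¹ i j * pd (pd f j) i y) * (Lmetric L y).det / L y := by
    rw [← Finset.sum_mul, div_eq_mul_inv, mul_assoc]
  rw [hE1]
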